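/- Let B be a T0 topological space. For each open V ⊆ B let X_V be the set of all completely prime filters on the lattice of open subsets of V, with maps R^W_V : X_W → X_V for opens W ⊆ V given by R^W_V(𝒜) = { U : U open, U ⊆ V, U ∩ W ∈ 𝒜 }. Suppose there exist a set X, a map f : X → B, and for each open V a bijection ψ_V : X_V → f⁻¹(V) such that for all opens W ⊆ V and every 𝒜 ∈ X_W one has ψ_V(R^W_V(𝒜)) = ψ_W(𝒜) as elements of X. Then B is sober (T0 and quasi-sober), and moreover f is injective. -/

import Mathlib

open TopologicalSpace

/-- A completely prime filter on the lattice of open subsets of an open set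
`V ⊆ B`: a collection `𝒜` of open subsets of `V` containing `V`, upward closed
(within the opens of `V`), closed under binary intersections, and inaccessible
by arbitrary unions of opens of `V`. -/
def IsCPFilterOn {B : Type} [TopologicalSpace B] (V : Opens B)
    (𝒜 : Set (Opens B)) : Prop :=
  (∀ U ∈ 𝒜, U ≤ V) ∧
  V ∈ 𝒜 ∧
  (∀ W ∈ 𝒜, ∀ U : Opens B, W ≤ U → U ≤ V → U ∈ 𝒜) ∧
  (∀ U ∈ 𝒜, ∀ W ∈ 𝒜, U ⊓ W ∈ 𝒜) ∧
  (∀ 𝒲 : Set (Opens B), (∀ W ∈ 𝒲, W ≤ V) → sSup 𝒲 ∈ 𝒜 → ∃ W ∈ 𝒲, W ∈ 𝒜)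

/-- The inclusion map `R^W_V` of the copresheaf of completely prime filters:
`R^W_V(𝒜) = { U : U open, U ⊆ V, U ∩ W ∈ 𝒜 }`. -/
def filtMap {B : Type} [TopologicalSpace B] (W V : Opens B)
    (𝒜 : Set (Opens B)) : Set (Opens B) :=
  {U : Opens B | U ≤ V ∧ U ⊓ W ∈ 𝒜}

/-!
Over `⊤` the bijection `ψ_⊤` attaches to every `x : X` a completely prime filter `𝒜_x` on the
opens of `B`, and compatibility with the maps `R^V_⊤` shows that `f x ∈ V ↔ V ∈ 𝒜_x`: a filter on
`V` and its image under `R^V_⊤` have the same point, and every completely prime filter on `B`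
containing `V` is such an image. Hence `f` is injective, since `x` is determined by `𝒜_x`. If `S`
is closed and irreducible, the opens meeting `S` form a completely prime filter, and the point of
`X` it corresponds to is sent by `f` to a point lying in exactly the opens that meet `S`, i.e. to
a generic point of `S`.
-/

section

variable {B : Type} [TopologicalSpace B]

def filtRestrict (V : Opens B) (𝒜 : Set (Opens B)) : Set (Opens B) :=
  {U | U ≤ V ∧ U ∈ 𝒜}

theorem IsCPFilterOn.map {W V : Opens B} (hWV : W ≤ V) {𝒜 : Set (Opens B)}
    (h𝒜 : IsCPFilterOn W 𝒜) : IsCPFilterOn V (filtMap W V 𝒜) := by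
  obtain ⟨-, hW, hup, hinf, hprime⟩ := h𝒜
  refine ⟨fun U hU => hU.1, ⟨le_rfl, by rwa [inf_eq_right.2 hWV]⟩, ?_, ?_, ?_⟩
  · intro U hU U' hUU' hU'V
    exact ⟨hU'V, hup _ hU.2 _ (inf_le_inf_right W hUU') inf_le_right⟩
  · intro U hU U' hU'
    refine ⟨inf_le_of_left_le hU.1, hup _ (hinf _ hU.2 _ hU'.2) _ ?_ inf_le_right⟩
    exact le_inf (inf_le_inf inf_le_left inf_le_left) (inf_le_of_left_le inf_le_right)
  · intro 𝒲 h𝒲 hs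
    have hsup : sSup ((· ⊓ W) '' 𝒲) ∈ 𝒜 := by
      rw [sSup_image, ← sSup_inf_eq]
      exact hs.2
    obtain ⟨-, ⟨U, hU, rfl⟩, hUW⟩ := hprime _ (by rintro _ ⟨U, -, rfl⟩; exact inf_le_right) hsup
    exact ⟨U, hU, h𝒲 U hU, hUW⟩

theorem IsCPFilterOn.restrict {V : Opens B} {𝒜 : Set (Opens B)} (h𝒜 : IsCPFilterOn ⊤ 𝒜)
    (hV : V ∈ 𝒜) : IsCPFilterOn V (filtRestrict V 𝒜) := by
  obtain ⟨-, -, hup, hinf, hprime⟩ := h𝒜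
  refine ⟨fun U hU => hU.1, ⟨le_rfl, hV⟩, ?_, ?_, ?_⟩
  · intro U hU U' hUU' hU'V
    exact ⟨hU'V, hup _ hU.2 _ hUU' le_top⟩
  · intro U hU U' hU'
    exact ⟨inf_le_of_left_le hU.1, hinf _ hU.2 _ hU'.2⟩
  · intro 𝒲 h𝒲 hs
    obtain ⟨U, hU, hU𝒜⟩ := hprime 𝒲 (fun _ _ => le_top) hs.2
    exact ⟨U, hU, h𝒲 U hU, hU𝒜⟩

theorem filtMap_filtRestrict {V : Opens B} {𝒜 : Set (Opens B)} (h𝒜 : IsCPFilterOn ⊤ 𝒜)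
    (hV : V ∈ 𝒜) : filtMap V ⊤ (filtRestrict V 𝒜) = 𝒜 := by
  obtain ⟨-, -, hup, hinf, -⟩ := h𝒜
  ext U
  exact ⟨fun ⟨_, _, hUV⟩ => hup _ hUV _ inf_le_left le_top,
    fun hU => ⟨le_top, inf_le_right, hinf _ hU _ hV⟩⟩

theorem IsIrreducible.isCPFilterOn_top {S : Set B} (hS : IsIrreducible S) :
    IsCPFilterOn ⊤ {U : Opens B | (S ∩ U).Nonempty} := by
  refine ⟨fun _ _ => le_top, by simpa using hS.nonempty, ?_, ?_, ?_⟩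
  · intro W hW U hWU _
    exact hW.mono (Set.inter_subset_inter_right S hWU)
  · intro U hU W hW
    exact hS.2 U W U.2 W.2 hU hW
  · intro 𝒲 _ ⟨b, hbS, hb⟩
    obtain ⟨U, hU, hbU⟩ := Opens.mem_sSup.1 hb
    exact ⟨U, hU, b, hbS, hbU⟩

theorem isGenericPoint_of_forall_mem_iff {S : Set B} {b : B} (hS : IsClosed S)
    (h : ∀ U : Opens B, b ∈ U ↔ (S ∩ U).Nonempty) : IsGenericPoint b S := by
  refine isGenericPoint_iff_specializes.2 fun y => ⟨fun hby => ?_, fun hy => ?_⟩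
  · by_contra hyS
    obtain ⟨z, hzS, hz⟩ := (h ⟨Sᶜ, hS.isOpen_compl⟩).1 (hby.mem_open hS.isOpen_compl hyS)
    exact hz hzS
  · exact specializes_iff_forall_open.2 fun U hU hyU => (h ⟨U, hU⟩).2 ⟨y, hy, hyU⟩

def TubesCompatible {X : Type} (f : X → B)
    (ψ : ∀ V : Opens B, {𝒜 : Set (Opens B) // IsCPFilterOn V 𝒜} → {x : X // f x ∈ V}) : Prop :=
  ∀ (W V : Opens B), W ≤ V →
    ∀ (𝒜 : Set (Opens B)) (hA : IsCPFilterOn W 𝒜) (hA' : IsCPFilterOn V (filtMap W V 𝒜)),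
      ((ψ V ⟨filtMap W V 𝒜, hA'⟩ : {x : X // f x ∈ V}) : X) =
        ((ψ W ⟨𝒜, hA⟩ : {x : X // f x ∈ W}) : X)

namespace TubesCompatible

variable {X : Type} {f : X → B}
  {ψ : ∀ V : Opens B, {𝒜 : Set (Opens B) // IsCPFilterOn V 𝒜} → {x : X // f x ∈ V}}

theorem apply_top_mem_iff (hψ : TubesCompatible f ψ) (hbij : ∀ V, Function.Bijective (ψ V))
    (𝒜 : {𝒜 : Set (Opens B) // IsCPFilterOn ⊤ 𝒜}) (V : Opens B) :
    f (ψ ⊤ 𝒜) ∈ V ↔ V ∈ 𝒜.1 := by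
  constructor
  · intro hV
    obtain ⟨ℬ, hℬ⟩ := (hbij V).2 ⟨_, hV⟩
    have hmap : ⟨filtMap V ⊤ ℬ.1, ℬ.2.map le_top⟩ = 𝒜 :=
      (hbij ⊤).1 <| Subtype.ext <| by rw [hψ V ⊤ le_top ℬ.1 ℬ.2, hℬ]
    rw [← hmap]
    exact ⟨le_top, by rw [inf_idem]; exact ℬ.2.2.1⟩
  · intro hV
    have hres := 𝒜.2.restrict hV
    have hmap : ⟨filtMap V ⊤ (filtRestrict V 𝒜.1), hres.map le_top⟩ = 𝒜 :=
      Subtype.ext (filtMap_filtRestrict 𝒜.2 hV)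
    rw [← hmap, hψ V ⊤ le_top _ hres]
    exact (ψ V _).2

theorem injective (hψ : TubesCompatible f ψ) (hbij : ∀ V, Function.Bijective (ψ V)) :
    Function.Injective f := by
  intro x y hxy
  obtain ⟨𝒜, h𝒜⟩ := (hbij ⊤).2 ⟨x, trivial⟩
  obtain ⟨ℬ, hℬ⟩ := (hbij ⊤).2 ⟨y, trivial⟩
  have h𝒜ℬ : 𝒜 = ℬ := Subtype.ext <| Set.ext fun V => by
    rw [← hψ.apply_top_mem_iff hbij, ← hψ.apply_top_mem_iff hbij, h𝒜, hℬ, hxy]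
  subst h𝒜ℬ
  exact congrArg Subtype.val (h𝒜.symm.trans hℬ)

theorem quasiSober (hψ : TubesCompatible f ψ) (hbij : ∀ V, Function.Bijective (ψ V)) :
    QuasiSober B where
  sober hS hSc :=
    ⟨f (ψ ⊤ ⟨_, hS.isCPFilterOn_top⟩),
      isGenericPoint_of_forall_mem_iff hSc (hψ.apply_top_mem_iff hbij ⟨_, hS.isCPFilterOn_top⟩)⟩

end TubesCompatible

end

theorem sober_of_filt_cosheaf_iso_tubes_general {B : Type} [TopologicalSpace B]
    (X : Type) (f : X → B)
    (ψ : ∀ V : Opens B, {𝒜 : Set (Opens B) // IsCPFilterOn V 𝒜} →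
      {x : X // f x ∈ V})
    (hbij : ∀ V : Opens B, Function.Bijective (ψ V))
    (hcompat : ∀ (W V : Opens B), W ≤ V →
      ∀ (𝒜 : Set (Opens B)) (hA : IsCPFilterOn W 𝒜)
        (hA' : IsCPFilterOn V (filtMap W V 𝒜)),
      ((ψ V ⟨filtMap W V 𝒜, hA'⟩ : {x : X // f x ∈ V}) : X) =
        ((ψ W ⟨𝒜, hA⟩ : {x : X // f x ∈ W}) : X)) :
    QuasiSober B ∧ Function.Injective f :=
  have hψ : TubesCompatible f ψ := hcompat
  ⟨hψ.quasiSober hbij, hψ.injective hbij⟩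

/-- Let `B` be T0, and let `X_V` be the set of completely prime
filters on the opens of each open `V`, with inclusion maps `R^W_V = filtMap W V`.
If there are a set `X`, a map `f : X → B` and bijections `ψ_V : X_V → f⁻¹(V)`
such that `ψ_V(R^W_V(𝒜)) = ψ_W(𝒜)` (in `X`) for all opens `W ≤ V` and all
`𝒜 ∈ X_W`, then `B` is sober (T0 and quasi-sober) and `f` is injective. -/
theorem sober_of_filt_cosheaf_iso_tubes {B : Type} [TopologicalSpace B]
    [T0Space B] (X : Type) (f : X → B)
    (ψ : ∀ V : Opens B, {𝒜 : Set (Opens B) // IsCPFilterOn V 𝒜} →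
      {x : X // f x ∈ V})
    (hbij : ∀ V : Opens B, Function.Bijective (ψ V))
    (hcompat : ∀ (W V : Opens B), W ≤ V →
      ∀ (𝒜 : Set (Opens B)) (hA : IsCPFilterOn W 𝒜)
        (hA' : IsCPFilterOn V (filtMap W V 𝒜)),
      ((ψ V ⟨filtMap W V 𝒜, hA'⟩ : {x : X // f x ∈ V}) : X) =
        ((ψ W ⟨𝒜, hA⟩ : {x : X // f x ∈ W}) : X)) :
    QuasiSober B ∧ Function.Injective f :=
  sober_of_filt_cosheaf_iso_tubes_general X f ψ hbij hcompat
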